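/- arXiv:2103.06688 — 3 statements merged into one kernel-verified Lean document; each statement's English description precedes it below -/
import Mathlib

section
/- Let f(x) = γ·ln(Σ_{j=1}^m exp([Ax]_j/γ)) − ⟨b, x⟩ with γ > 0. Then each partial derivative ∇_i f is componentwise Lipschitz: for all x ∈ ℝⁿ and u ∈ ℝ, |∇_i f(x + u eᵢ) − ∇_i f(x)| ≤ L_i·|u| with L_i = (1/γ)·max_{j=1,…,m} |A_{ji}|² (in particular with L_i = (1/γ)·max_j |A_{ji}| when all entries satisfy |A_{ji}| ≤ 1). -/
/-!
The directional derivative of `x ↦ γ log ∑ⱼ exp ((Ax)ⱼ / γ) - ⟪b, x⟫` along `v` is the mean of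
`Av` under the softmax weights `exp ((Ax)ⱼ / γ)`, minus `⟪b, v⟫`. Moving `x` along `v = eᵢ`
shifts the exponents by `t • A.col i`, and differentiating the weighted mean in `t` gives the
weighted variance of `A.col i` divided by `γ`. That variance lies between `0` (Cauchy–Schwarz)
and the weighted mean of `A j i ^ 2`, hence below `maxⱼ |A j i| ^ 2`; the mean value theorem
turns this derivative bound into the Lipschitz bound.
-/

open Real Finset
open scoped Matrix InnerProductSpace

noncomputable section

section Softmax

variable {ι : Type*} [Fintype ι]

def logSumExp (γ : ℝ) (z : ι → ℝ) : ℝ := γ * log (∑ j, exp (z j / γ))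

def softmaxMean (γ : ℝ) (z a : ι → ℝ) : ℝ := (∑ j, a j * exp (z j / γ)) / ∑ j, exp (z j / γ)

def softmaxVariance (γ : ℝ) (z a : ι → ℝ) : ℝ :=
  softmaxMean γ z (a ^ 2) - softmaxMean γ z a ^ 2

lemma hasDerivAt_sum_mul_exp_add_smul {γ : ℝ} (c z a : ι → ℝ) (t : ℝ) :
    HasDerivAt (fun t => ∑ j, c j * exp ((z + t • a) j / γ))
      ((∑ j, (c * a) j * exp ((z + t • a) j / γ)) / γ) t := by
  have hline (j : ι) : HasDerivAt (fun t => (z + t • a) j / γ) (a j / γ) t := by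
    simpa using (((hasDerivAt_id t).mul_const (a j)).const_add (z j)).div_const γ
  refine (HasDerivAt.fun_sum fun j _ => ((hline j).exp).const_mul (c j)).congr_deriv ?_
  simp only [sum_div, Pi.mul_apply]
  refine sum_congr rfl fun j _ => ?_
  ring

variable [Nonempty ι]

lemma sum_exp_div_pos (γ : ℝ) (z : ι → ℝ) : 0 < ∑ j, exp (z j / γ) :=
  sum_pos (fun _ _ => exp_pos _) univ_nonempty

lemma hasFDerivAt_logSumExp {γ : ℝ} (hγ : γ ≠ 0) (z : ι → ℝ) :
    HasFDerivAt (logSumExp γ) (∑ j, (exp (z j / γ) / ∑ k, exp (z k / γ)) •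
      ContinuousLinearMap.proj (R := ℝ) (φ := fun _ : ι => ℝ) j) z := by
  have hexp (j : ι) : HasFDerivAt (fun z : ι → ℝ => exp (z j / γ))
      (exp (z j / γ) • (γ⁻¹ • ContinuousLinearMap.proj (R := ℝ) (φ := fun _ : ι => ℝ) j)) z := by
    simpa only [div_eq_inv_mul] using ((hasFDerivAt_apply j z).const_mul γ⁻¹).exp
  refine (((HasFDerivAt.fun_sum fun j _ => hexp j).log
    (sum_exp_div_pos γ z).ne').const_mul γ).congr_fderiv ?_
  ext v
  simp only [smul_apply, _root_.sum_apply, ContinuousLinearMap.proj_apply, smul_eq_mul, mul_sum]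
  refine sum_congr rfl fun j _ => ?_
  field_simp

lemma fderiv_logSumExp_apply {γ : ℝ} (hγ : γ ≠ 0) (z v : ι → ℝ) :
    fderiv ℝ (logSumExp γ) z v = softmaxMean γ z v := by
  rw [(hasFDerivAt_logSumExp hγ z).fderiv]
  simp [softmaxMean, sum_div, mul_div_assoc, mul_comm]

lemma sq_softmaxMean_le (γ : ℝ) (z a : ι → ℝ) :
    softmaxMean γ z a ^ 2 ≤ softmaxMean γ z (a ^ 2) := by
  have hP := sum_exp_div_pos γ z
  have hCS : (∑ j, a j * exp (z j / γ)) ^ 2 ≤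
      (∑ j, a j ^ 2 * exp (z j / γ)) * ∑ j, exp (z j / γ) :=
    sum_sq_le_sum_mul_sum_of_sq_le_mul _ (fun _ _ => by positivity) (fun _ _ => by positivity)
      (fun _ _ => le_of_eq (by ring))
  simp only [softmaxMean, Pi.pow_apply]
  rw [div_pow, div_le_div_iff₀ (by positivity) hP, pow_two (∑ j, exp _), ← mul_assoc]
  exact mul_le_mul_of_nonneg_right hCS hP.le

lemma softmaxMean_le {a : ι → ℝ} {S : ℝ} (ha : ∀ j, a j ≤ S) (γ : ℝ) (z : ι → ℝ) :
    softmaxMean γ z a ≤ S := by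
  rw [softmaxMean, div_le_iff₀ (sum_exp_div_pos γ z), mul_sum]
  exact sum_le_sum fun j _ => mul_le_mul_of_nonneg_right (ha j) (exp_pos _).le

lemma abs_softmaxVariance_le {a : ι → ℝ} {S : ℝ} (ha : ∀ j, a j ^ 2 ≤ S) (γ : ℝ) (z : ι → ℝ) :
    |softmaxVariance γ z a| ≤ S := by
  have hmean := softmaxMean_le (a := a ^ 2) ha γ z
  rw [abs_le, softmaxVariance]
  constructor <;> nlinarith [sq_softmaxMean_le γ z a, sq_nonneg (softmaxMean γ z a)]

lemma hasDerivAt_softmaxMean_add_smul {γ : ℝ} (hγ : γ ≠ 0) (z a : ι → ℝ) (t : ℝ) :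
    HasDerivAt (fun t => softmaxMean γ (z + t • a) a)
      (softmaxVariance γ (z + t • a) a / γ) t := by
  have hP := hasDerivAt_sum_mul_exp_add_smul (γ := γ) 1 z a t
  have hN := hasDerivAt_sum_mul_exp_add_smul (γ := γ) a z a t
  simp only [Pi.one_apply, one_mul] at hP
  refine (hN.div hP (sum_exp_div_pos γ _).ne').congr_deriv ?_
  simp only [softmaxVariance, softmaxMean, Pi.mul_apply, Pi.pow_apply]
  field_simp

lemma abs_softmaxMean_add_smul_sub_le {γ : ℝ} (hγ : 0 < γ) {a : ι → ℝ} {S : ℝ}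
    (ha : ∀ j, a j ^ 2 ≤ S) (z : ι → ℝ) (u : ℝ) :
    |softmaxMean γ (z + u • a) a - softmaxMean γ z a| ≤ S / γ * |u| := by
  have hderiv (t : ℝ) (_ : t ∈ Set.univ) :=
    (hasDerivAt_softmaxMean_add_smul hγ.ne' z a t).hasDerivWithinAt (s := Set.univ)
  have hbound (t : ℝ) (_ : t ∈ Set.univ) : ‖softmaxVariance γ (z + t • a) a / γ‖ ≤ S / γ := by
    rw [norm_div, norm_of_nonneg hγ.le]
    exact div_le_div_of_nonneg_right (abs_softmaxVariance_le ha γ _) hγ.le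
  simpa using Convex.norm_image_sub_le_of_norm_hasDerivWithin_le hderiv hbound convex_univ
    (Set.mem_univ 0) (Set.mem_univ u)

end Softmax

lemma fderiv_logSumExp_mulVec_sub_inner_apply {ι κ : Type*} [Fintype ι] [Nonempty ι] [Fintype κ]
    (A : Matrix ι κ ℝ) (b : EuclideanSpace ℝ κ) {γ : ℝ} (hγ : γ ≠ 0) (y v : EuclideanSpace ℝ κ) :
    fderiv ℝ (fun x : EuclideanSpace ℝ κ => logSumExp γ (A *ᵥ x) - ⟪b, x⟫_ℝ) y v
      = softmaxMean γ (A *ᵥ y) (A *ᵥ v) - ⟪b, v⟫_ℝ := by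
  let ℓ : EuclideanSpace ℝ κ →L[ℝ] ι → ℝ :=
    (LinearMap.toContinuousLinearMap A.mulVecLin).comp
      (EuclideanSpace.equiv κ ℝ).toContinuousLinearMap
  have hlse : HasFDerivAt (logSumExp γ) (fderiv ℝ (logSumExp γ) (ℓ y)) (ℓ y) :=
    (hasFDerivAt_logSumExp hγ _).differentiableAt.hasFDerivAt
  have hF : HasFDerivAt (fun x : EuclideanSpace ℝ κ => logSumExp γ (A *ᵥ x) - ⟪b, x⟫_ℝ)
      ((fderiv ℝ (logSumExp γ) (ℓ y)).comp ℓ - innerSL ℝ b) y :=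
    (hlse.comp y ℓ.hasFDerivAt).sub (innerSL ℝ b).hasFDerivAt
  rw [hF.fderiv]
  exact congrArg (· - ⟪b, v⟫_ℝ) (fderiv_logSumExp_apply hγ (ℓ y) (ℓ v))

theorem stmt11 {m n : ℕ} [NeZero m] (A : Matrix (Fin m) (Fin n) ℝ)
    (b : EuclideanSpace ℝ (Fin n)) (γ : ℝ) (hγ : 0 < γ) :
    let f : EuclideanSpace ℝ (Fin n) → ℝ := fun x =>
      γ * Real.log (∑ j, Real.exp (A.mulVec x j / γ)) - (inner ℝ b x : ℝ)
    (∀ (x : EuclideanSpace ℝ (Fin n)) (u : ℝ) (i : Fin n),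
      |fderiv ℝ f (x + u • EuclideanSpace.single i 1) (EuclideanSpace.single i 1)
          - fderiv ℝ f x (EuclideanSpace.single i 1)|
        ≤ (1 / γ) * (⨆ j, |A j i| ^ 2) * |u|) ∧
    ((∀ j i, |A j i| ≤ 1) →
      ∀ (x : EuclideanSpace ℝ (Fin n)) (u : ℝ) (i : Fin n),
        |fderiv ℝ f (x + u • EuclideanSpace.single i 1) (EuclideanSpace.single i 1)
            - fderiv ℝ f x (EuclideanSpace.single i 1)|
          ≤ (1 / γ) * (⨆ j, |A j i|) * |u|) := by
  intro f
  have hpartial (x v : EuclideanSpace ℝ (Fin n)) :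
      fderiv ℝ f x v = softmaxMean γ (A *ᵥ x) (A *ᵥ v) - ⟪b, v⟫_ℝ :=
    fderiv_logSumExp_mulVec_sub_inner_apply A b hγ.ne' x v
  have hcol (i : Fin n) : A *ᵥ (EuclideanSpace.single i (1 : ℝ)) = A.col i := by simp
  have hlip (x : EuclideanSpace ℝ (Fin n)) (u : ℝ) (i : Fin n) :
      |fderiv ℝ f (x + u • EuclideanSpace.single i 1) (EuclideanSpace.single i 1)
          - fderiv ℝ f x (EuclideanSpace.single i 1)|
        ≤ (1 / γ) * (⨆ j, |A j i| ^ 2) * |u| := by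
    rw [hpartial, hpartial, sub_sub_sub_cancel_right, WithLp.ofLp_add, WithLp.ofLp_smul,
      Matrix.mulVec_add, Matrix.mulVec_smul, hcol, one_div_mul_eq_div]
    refine abs_softmaxMean_add_smul_sub_le hγ (fun j => ?_) _ u
    rw [Matrix.col_apply, ← sq_abs]
    exact le_ciSup (Set.finite_range fun j => |A j i| ^ 2).bddAbove j
  refine ⟨hlip, fun hA x u i => (hlip x u i).trans ?_⟩
  have hsup : (⨆ j, |A j i| ^ 2) ≤ ⨆ j, |A j i| :=
    ciSup_mono (Set.finite_range fun j => |A j i|).bddAbove fun j =>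
      pow_le_of_le_one (abs_nonneg _) (hA j i) two_ne_zero
  gcongr
end
end

section
/- Linear convergence of randomized coordinate descent on strongly convex functions: let F : ℝⁿ → ℝ be H-strongly convex with respect to ‖·‖₂, differentiable, with componentwise Lipschitz constants H + Lᵢ for F (i.e., |∇_i F(y + u eᵢ) − ∇_i F(y)| ≤ (H + Lᵢ)|u|). Let Z = Σ_{i=1}^n (H + Lᵢ), and run the coordinate descent y_{k+1} = y_k − (1/(H+L_i))·∇_i F(y_k)·e_i where coordinate i is sampled with probability p_i = (H+Lᵢ)/Z. Then E[F(y_N)] − F(y_*) ≤ (1 − H/Z)^N·(F(y_0) − F(y_*)). -/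
/-- One coordinate-descent trajectory: `cdSeq F L H y0 ω k` is the iterate after `k` steps,
where at step `k` the coordinate `ω k` is used with step size `1/(H + L i)`. -/
noncomputable def cdSeq {n : ℕ} (F : EuclideanSpace ℝ (Fin n) → ℝ) (L : Fin n → ℝ) (H : ℝ)
    (y0 : EuclideanSpace ℝ (Fin n)) (ω : ℕ → Fin n) : ℕ → EuclideanSpace ℝ (Fin n)
  | 0 => y0
  | k + 1 =>
      let y := cdSeq F L H y0 ω k
      let i := ω k
      y - ((1 / (H + L i)) * fderiv ℝ F y (EuclideanSpace.single i 1)) •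
        EuclideanSpace.single i 1

noncomputable def cdStep {n : ℕ} (F : EuclideanSpace ℝ (Fin n) → ℝ) (L : Fin n → ℝ) (H : ℝ)
    (y : EuclideanSpace ℝ (Fin n)) (i : Fin n) : EuclideanSpace ℝ (Fin n) :=
  y - ((1 / (H + L i)) * fderiv ℝ F y (EuclideanSpace.single i 1)) • EuclideanSpace.single i 1

private lemma cdSeq_succ' {n : ℕ} (F : EuclideanSpace ℝ (Fin n) → ℝ) (L : Fin n → ℝ) (H : ℝ)
    (y0 : EuclideanSpace ℝ (Fin n)) (ω : ℕ → Fin n) (k : ℕ) :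
    cdSeq F L H y0 ω (k + 1) = cdStep F L H (cdSeq F L H y0 ω k) (ω k) := rfl

private lemma cdSeq_congr' {n : ℕ} (F : EuclideanSpace ℝ (Fin n) → ℝ) (L : Fin n → ℝ) (H : ℝ)
    (y0 : EuclideanSpace ℝ (Fin n)) (ω ω' : ℕ → Fin n) :
    ∀ k : ℕ, (∀ t, t < k → ω t = ω' t) → cdSeq F L H y0 ω k = cdSeq F L H y0 ω' k := by
  intro k
  induction k with
  | zero => intro _; rfl
  | succ k ih =>
      intro h
      rw [cdSeq_succ', cdSeq_succ', ih (fun t ht => h t (Nat.lt_succ_of_lt ht)),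
        h k (Nat.lt_succ_self k)]

private lemma cdSeq_shift' {n : ℕ} (F : EuclideanSpace ℝ (Fin n) → ℝ) (L : Fin n → ℝ) (H : ℝ) :
    ∀ (k : ℕ) (y0 : EuclideanSpace ℝ (Fin n)) (ω : ℕ → Fin n),
    cdSeq F L H y0 ω (k + 1) = cdSeq F L H (cdStep F L H y0 (ω 0)) (fun t => ω (t + 1)) k := by
  intro k
  induction k with
  | zero => intro y0 ω; rfl
  | succ k ih =>
      intro y0 ω
      rw [cdSeq_succ', ih y0 ω, ← cdSeq_succ']


private lemma cd_hasDerivAt {E : Type*} [NormedAddCommGroup E] [NormedSpace ℝ E]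
    {F : E → ℝ} (hdiff : Differentiable ℝ F) (y v : E) (t : ℝ) :
    HasDerivAt (fun s : ℝ => F (y + s • v)) (fderiv ℝ F (y + t • v) v) t := by
  have h1 : HasDerivAt (fun s : ℝ => y + s • v) v t := by
    simpa using ((hasDerivAt_id t).smul_const v).const_add y
  exact ((hdiff (y + t • v)).hasFDerivAt.comp_hasDerivAt t h1)

private lemma convex_first_order {E : Type*} [NormedAddCommGroup E] [NormedSpace ℝ E]
    {G : E → ℝ} (hc : ConvexOn ℝ Set.univ G) (hd : Differentiable ℝ G) (y z : E) :
    G y + fderiv ℝ G y (z - y) ≤ G z := by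
  have hconv : ConvexOn ℝ Set.univ (fun t : ℝ => G (y + t • (z - y))) := by
    have h := hc.comp_affineMap (AffineMap.lineMap y z)
    have e1 : (AffineMap.lineMap y z : ℝ →ᵃ[ℝ] E) ⁻¹' Set.univ = Set.univ := by simp
    have e2 : (G ∘ (AffineMap.lineMap y z : ℝ →ᵃ[ℝ] E)) = fun t : ℝ => G (y + t • (z - y)) := by
      funext t; simp [AffineMap.lineMap_apply, add_comm]
    rwa [e1, e2] at h
  have hder := cd_hasDerivAt hd y (z - y) 0
  have hslope := hconv.le_slope_of_hasDerivAt (Set.mem_univ 0) (Set.mem_univ 1)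
    one_pos (by simpa using hder)
  simp [slope_def_field] at hslope
  rw [map_sub]
  linarith [hslope]

private lemma strong_first_order {E : Type*} [NormedAddCommGroup E] [InnerProductSpace ℝ E]
    {F : E → ℝ} {H : ℝ} (hconv : StrongConvexOn Set.univ H F) (hd : Differentiable ℝ F)
    (y z : E) : F y + fderiv ℝ F y (z - y) + H / 2 * ‖z - y‖ ^ 2 ≤ F z := by
  set G : E → ℝ := fun x => F x - H / 2 * ‖x‖ ^ 2 with hG
  have hGc : ConvexOn ℝ Set.univ G := strongConvexOn_iff_convex.mp hconv
  have hder : ∀ x : E, HasFDerivAt G (fderiv ℝ F x - (H / 2) • (2 • (innerSL ℝ x))) x := by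
    intro x
    exact (hd x).hasFDerivAt.sub (((hasStrictFDerivAt_norm_sq x).hasFDerivAt).const_mul (H / 2)) |>.congr_fderiv rfl
  have hGd : Differentiable ℝ G := fun x => (hder x).differentiableAt
  have h0 := convex_first_order hGc hGd y z
  rw [(hder y).fderiv] at h0
  have hfd : (fderiv ℝ F y - (H / 2) • (2 • (innerSL ℝ y))) (z - y)
      = fderiv ℝ F y (z - y) - H * (inner ℝ y (z - y) : ℝ) := by
    simp [ContinuousLinearMap.sub_apply, ContinuousLinearMap.smul_apply]
    ring
  rw [hfd] at h0
  have hns : ‖z - y‖ ^ 2 = ‖z‖ ^ 2 - 2 * (inner ℝ z y : ℝ) + ‖y‖ ^ 2 := norm_sub_sq_real z y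
  have hin : (inner ℝ y (z - y) : ℝ) = (inner ℝ z y : ℝ) - ‖y‖ ^ 2 := by
    rw [inner_sub_right, real_inner_comm y z, real_inner_self_eq_norm_sq]
  simp only [hG] at h0
  rw [hin] at h0
  rw [hns]
  linarith [h0]

private lemma fderiv_eq_sum {n : ℕ} {F : EuclideanSpace ℝ (Fin n) → ℝ}
    (hd : Differentiable ℝ F) (y w : EuclideanSpace ℝ (Fin n)) :
    fderiv ℝ F y w = ∑ i, w i * fderiv ℝ F y (EuclideanSpace.single i 1) := by
  have hw : w = ∑ i, w i • EuclideanSpace.single i 1 := by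
    ext j
    rw [WithLp.ofLp_sum, Finset.sum_apply]
    simp [EuclideanSpace.single_apply]
  conv_lhs => rw [hw]
  rw [map_sum]
  simp [smul_eq_mul]

private lemma pl_ineq {n : ℕ} {F : EuclideanSpace ℝ (Fin n) → ℝ} {H : ℝ} (hH : 0 < H)
    (hconv : StrongConvexOn Set.univ H F) (hd : Differentiable ℝ F)
    (ystar : EuclideanSpace ℝ (Fin n)) (hmin : ∀ z, F ystar ≤ F z)
    (y : EuclideanSpace ℝ (Fin n)) :
    2 * H * (F y - F ystar) ≤ ∑ i, (fderiv ℝ F y (EuclideanSpace.single i 1)) ^ 2 := by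
  have h0 := strong_first_order hconv hd y ystar
  rw [fderiv_eq_sum hd] at h0
  set g : Fin n → ℝ := fun i => fderiv ℝ F y (EuclideanSpace.single i 1) with hg
  set d : EuclideanSpace ℝ (Fin n) := ystar - y with hdd
  have hnorm : ‖d‖ ^ 2 = ∑ i, (d i) ^ 2 := by
    rw [EuclideanSpace.norm_eq, Real.sq_sqrt (by positivity)]
    simp [Real.norm_eq_abs, sq_abs]
  have hkey : 0 ≤ ∑ i, (H / 2 * d i ^ 2 + d i * g i + g i ^ 2 / (2 * H)) := by
    apply Finset.sum_nonneg
    intro i _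
    have : H / 2 * d i ^ 2 + d i * g i + g i ^ 2 / (2 * H) = H / 2 * (d i + g i / H) ^ 2 := by
      field_simp
      ring
    rw [this]
    positivity
  have hexp : ∑ i, (H / 2 * d i ^ 2 + d i * g i + g i ^ 2 / (2 * H))
      = H / 2 * (∑ i, d i ^ 2) + (∑ i, d i * g i) + (∑ i, g i ^ 2) / (2 * H) := by
    rw [Finset.sum_add_distrib, Finset.sum_add_distrib, ← Finset.mul_sum, ← Finset.sum_div]
  rw [hexp] at hkey
  have hmin' := hmin y
  rw [hnorm] at h0
  have h2H : (0:ℝ) < 2 * H := by linarith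
  simp only [show ∀ i, (fderiv ℝ F y) (EuclideanSpace.single i 1) = g i from fun i => rfl]
    at h0 ⊢
  have h5 : F y - F ystar ≤ (∑ i, g i ^ 2) / (2 * H) := by linarith
  calc 2 * H * (F y - F ystar) ≤ 2 * H * ((∑ i, g i ^ 2) / (2 * H)) :=
        mul_le_mul_of_nonneg_left h5 (by linarith)
    _ = ∑ i, g i ^ 2 := by field_simp

private lemma descent_lemma {n : ℕ} {F : EuclideanSpace ℝ (Fin n) → ℝ} {L : Fin n → ℝ} {H : ℝ}
    (hH : 0 < H) (hL : ∀ i, 0 ≤ L i) (hdiff : Differentiable ℝ F)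
    (hcw : ∀ (y : EuclideanSpace ℝ (Fin n)) (u : ℝ) (i : Fin n),
      |fderiv ℝ F (y + u • EuclideanSpace.single i 1) (EuclideanSpace.single i 1)
          - fderiv ℝ F y (EuclideanSpace.single i 1)| ≤ (H + L i) * |u|)
    (y : EuclideanSpace ℝ (Fin n)) (u : ℝ) (i : Fin n) :
    F (y + u • EuclideanSpace.single i 1) ≤ F y
      + fderiv ℝ F y (EuclideanSpace.single i 1) * u + (H + L i) / 2 * u ^ 2 := by
  set e : EuclideanSpace ℝ (Fin n) := EuclideanSpace.single i 1 with he
  set K : ℝ := H + L i with hKdef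
  have hK : 0 < K := by have := hL i; rw [hKdef]; linarith
  set g : ℝ := fderiv ℝ F y e with hgdef
  set c : ℝ → ℝ := fun t => fderiv ℝ F (y + t • e) e with hcdef
  have hlip : ∀ s t : ℝ, |c t - c s| ≤ K * |t - s| := by
    intro s t
    have h1 := hcw (y + s • e) (t - s) i
    rw [← he] at h1
    have h2 : y + s • e + (t - s) • e = y + t • e := by
      rw [add_assoc, ← add_smul]
      ring_nf
    rw [h2] at h1
    exact h1
  have hccont : Continuous c := by
    apply LipschitzWith.continuous (K := K.toNNReal)
    apply LipschitzWith.of_dist_le_mul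
    intro a b
    rw [Real.dist_eq, Real.dist_eq, Real.coe_toNNReal _ hK.le]
    exact hlip b a
  -- derivative of s ↦ F (y + (s*u) • e)
  have hψ : ∀ s : ℝ, HasDerivAt (fun s : ℝ => F (y + (s * u) • e)) (u * c (s * u)) s := by
    intro s
    have h1 := cd_hasDerivAt hdiff y (u • e) s
    simp only [smul_smul] at h1
    have h2 : (fderiv ℝ F (y + (s * u) • e)) (u • e) = u * c (s * u) := by
      rw [ContinuousLinearMap.map_smul, smul_eq_mul, hcdef]
    rw [h2] at h1
    simpa [mul_comm] using h1
  have hcont1 : Continuous fun s : ℝ => u * c (s * u) :=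
    continuous_const.mul (hccont.comp (continuous_id.mul continuous_const))
  have hint1 : IntervalIntegrable (fun s : ℝ => u * c (s * u)) MeasureTheory.volume 0 1 :=
    hcont1.intervalIntegrable 0 1
  have hftc : ∫ s in (0:ℝ)..1, u * c (s * u)
      = F (y + u • e) - F y := by
    rw [intervalIntegral.integral_eq_sub_of_hasDerivAt (fun s _ => hψ s) hint1]
    norm_num
  have hcont2 : Continuous fun s : ℝ => u * g + K * u ^ 2 * s :=
    continuous_const.add (continuous_const.mul continuous_id)
  have hint2 : IntervalIntegrable (fun s : ℝ => u * g + K * u ^ 2 * s) MeasureTheory.volume 0 1 :=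
    hcont2.intervalIntegrable 0 1
  have hpt : ∀ s ∈ Set.Icc (0:ℝ) 1, u * c (s * u) ≤ u * g + K * u ^ 2 * s := by
    intro s hs
    have h1 : |c (s * u) - c 0| ≤ K * |s * u| := by
      have := hlip 0 (s * u)
      simpa using this
    have hc0 : c 0 = g := by rw [hcdef]; simp [hgdef]
    rw [hc0] at h1
    have habs : |s * u| = s * |u| := by
      rw [abs_mul, abs_of_nonneg hs.1]
    rw [habs] at h1
    have h3 : u * (c (s * u) - g) ≤ |u| * (K * (s * |u|)) := by
      calc u * (c (s * u) - g) ≤ |u * (c (s * u) - g)| := le_abs_self _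
        _ = |u| * |c (s * u) - g| := abs_mul _ _
        _ ≤ |u| * (K * (s * |u|)) := by
            apply mul_le_mul_of_nonneg_left h1 (abs_nonneg u)
    have h4 : |u| * (K * (s * |u|)) = K * u ^ 2 * s := by
      rw [← sq_abs u]; ring
    nlinarith [h3, h4]
  have hmono := intervalIntegral.integral_mono_on (by norm_num : (0:ℝ) ≤ 1) hint1 hint2 hpt
  have hrhs : ∫ s in (0:ℝ)..1, (u * g + K * u ^ 2 * s)
      = u * g + K * u ^ 2 / 2 := by
    have hint3 : IntervalIntegrable (fun s : ℝ => K * u ^ 2 * s) MeasureTheory.volume 0 1 := by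
      apply Continuous.intervalIntegrable
      continuity
    rw [intervalIntegral.integral_add intervalIntegrable_const hint3,
      intervalIntegral.integral_const, intervalIntegral.integral_const_mul, integral_id]
    norm_num
    ring
  rw [hrhs] at hmono
  rw [hftc] at hmono
  linarith [hmono]

private lemma step_decrease {n : ℕ} {F : EuclideanSpace ℝ (Fin n) → ℝ} {L : Fin n → ℝ} {H : ℝ}
    (hH : 0 < H) (hL : ∀ i, 0 ≤ L i) (hdiff : Differentiable ℝ F)
    (hcw : ∀ (y : EuclideanSpace ℝ (Fin n)) (u : ℝ) (i : Fin n),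
      |fderiv ℝ F (y + u • EuclideanSpace.single i 1) (EuclideanSpace.single i 1)
          - fderiv ℝ F y (EuclideanSpace.single i 1)| ≤ (H + L i) * |u|)
    (y : EuclideanSpace ℝ (Fin n)) (i : Fin n) :
    F (cdStep F L H y i) ≤ F y
      - (fderiv ℝ F y (EuclideanSpace.single i 1)) ^ 2 / (2 * (H + L i)) := by
  have hK : 0 < H + L i := by have := hL i; linarith
  set g : ℝ := fderiv ℝ F y (EuclideanSpace.single i 1) with hg
  have h1 := descent_lemma hH hL hdiff hcw y (-(1 / (H + L i)) * g) i
  rw [← hg] at h1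
  have h2 : y + (-(1 / (H + L i)) * g) • EuclideanSpace.single i 1 = cdStep F L H y i := by
    rw [cdStep, sub_eq_add_neg, ← neg_smul, ← hg]
    ring_nf
  rw [h2] at h1
  have h3 : g * (-(1 / (H + L i)) * g) + (H + L i) / 2 * (-(1 / (H + L i)) * g) ^ 2
      = -(g ^ 2 / (2 * (H + L i))) := by
    field_simp
    ring
  linarith [h1, h3.le, h3.ge]

private lemma exp_step {n : ℕ} [NeZero n] {F : EuclideanSpace ℝ (Fin n) → ℝ} {L : Fin n → ℝ}
    {H : ℝ} (hH : 0 < H) (hL : ∀ i, 0 ≤ L i) (hdiff : Differentiable ℝ F)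
    (hconv : StrongConvexOn Set.univ H F)
    (hcw : ∀ (y : EuclideanSpace ℝ (Fin n)) (u : ℝ) (i : Fin n),
      |fderiv ℝ F (y + u • EuclideanSpace.single i 1) (EuclideanSpace.single i 1)
          - fderiv ℝ F y (EuclideanSpace.single i 1)| ≤ (H + L i) * |u|)
    (ystar : EuclideanSpace ℝ (Fin n)) (hmin : ∀ z, F ystar ≤ F z)
    (y : EuclideanSpace ℝ (Fin n)) :
    ∑ i, ((H + L i) / (∑ j, (H + L j))) * F (cdStep F L H y i)
      ≤ F ystar + (1 - H / (∑ j, (H + L j))) * (F y - F ystar) := by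
  set Z : ℝ := ∑ j, (H + L j) with hZdef
  have hKpos : ∀ i : Fin n, 0 < H + L i := fun i => by have := hL i; linarith
  have hZ : 0 < Z := Finset.sum_pos (fun i _ => hKpos i) ⟨Classical.arbitrary (Fin n),
    Finset.mem_univ _⟩
  set g : Fin n → ℝ := fun i => fderiv ℝ F y (EuclideanSpace.single i 1) with hg
  have step1 : ∑ i, ((H + L i) / Z) * F (cdStep F L H y i)
      ≤ ∑ i, ((H + L i) / Z) * (F y - g i ^ 2 / (2 * (H + L i))) := by
    apply Finset.sum_le_sum
    intro i _
    exact mul_le_mul_of_nonneg_left (step_decrease hH hL hdiff hcw y i)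
      (div_nonneg (hKpos i).le hZ.le)
  have step2 : ∑ i, ((H + L i) / Z) * (F y - g i ^ 2 / (2 * (H + L i)))
      = F y - (∑ i, g i ^ 2) / (2 * Z) := by
    have hterm : ∀ i : Fin n, ((H + L i) / Z) * (F y - g i ^ 2 / (2 * (H + L i)))
        = (H + L i) * F y / Z - g i ^ 2 / (2 * Z) := by
      intro i
      have := (hKpos i).ne'
      field_simp
    rw [Finset.sum_congr rfl (fun i _ => hterm i), Finset.sum_sub_distrib,
      ← Finset.sum_div, ← Finset.sum_div, ← Finset.sum_mul, ← hZdef]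
    congr 1
    field_simp
  have step3 := pl_ineq hH hconv hdiff ystar hmin y
  simp only [show ∀ i, (fderiv ℝ F y) (EuclideanSpace.single i 1) = g i from fun i => rfl]
    at step3
  have step4 : H / Z * (F y - F ystar) ≤ (∑ i, g i ^ 2) / (2 * Z) := by
    rw [div_mul_eq_mul_div, div_le_div_iff₀ hZ (by positivity)]
    nlinarith [step3, hZ.le]
  have hrw : F ystar + (1 - H / Z) * (F y - F ystar)
      = F y - H / Z * (F y - F ystar) := by ring
  rw [hrw]
  calc ∑ i, ((H + L i) / Z) * F (cdStep F L H y i)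
      ≤ F y - (∑ i, g i ^ 2) / (2 * Z) := by rw [← step2]; exact step1
    _ ≤ F y - H / Z * (F y - F ystar) := by linarith [step4]

private lemma cd_main {n : ℕ} [NeZero n] {F : EuclideanSpace ℝ (Fin n) → ℝ} {L : Fin n → ℝ}
    {H : ℝ} (hH : 0 < H) (hL : ∀ i, 0 ≤ L i) (hdiff : Differentiable ℝ F)
    (hconv : StrongConvexOn Set.univ H F)
    (hcw : ∀ (y : EuclideanSpace ℝ (Fin n)) (u : ℝ) (i : Fin n),
      |fderiv ℝ F (y + u • EuclideanSpace.single i 1) (EuclideanSpace.single i 1)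
          - fderiv ℝ F y (EuclideanSpace.single i 1)| ≤ (H + L i) * |u|)
    (ystar : EuclideanSpace ℝ (Fin n)) (hmin : ∀ z, F ystar ≤ F z) :
    ∀ (N : ℕ) (y0 : EuclideanSpace ℝ (Fin n)),
    (∑ w : Fin N → Fin n, (∏ k, (H + L (w k)) / (∑ j, (H + L j))) *
        F (cdSeq F L H y0
            (fun t => if h : t < N then w ⟨t, h⟩ else Classical.arbitrary (Fin n)) N))
      ≤ F ystar + (1 - H / (∑ j, (H + L j))) ^ N * (F y0 - F ystar) := by
  have hKpos : ∀ i : Fin n, 0 < H + L i := fun i => by have := hL i; linarith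
  set Z : ℝ := ∑ j, (H + L j) with hZdef
  have hZ : 0 < Z := Finset.sum_pos (fun i _ => hKpos i) ⟨Classical.arbitrary (Fin n),
    Finset.mem_univ _⟩
  have hp1 : ∑ i, (H + L i) / Z = 1 := by
    rw [← Finset.sum_div, ← hZdef, div_self hZ.ne']
  have hc : 0 ≤ 1 - H / Z := by
    have hnH : (n : ℝ) * H ≤ Z := by
      rw [hZdef]
      calc (n : ℝ) * H = ∑ _i : Fin n, H := by simp [mul_comm]
        _ ≤ ∑ j, (H + L j) := Finset.sum_le_sum (fun i _ => by have := hL i; linarith)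
    have hn1 : (1 : ℝ) ≤ (n : ℝ) := by
      have := Nat.one_le_iff_ne_zero.mpr (NeZero.ne n)
      exact_mod_cast this
    have hHZ : H ≤ Z := by nlinarith
    have : H / Z ≤ 1 := (div_le_one hZ).mpr hHZ
    linarith
  intro N
  induction N with
  | zero =>
      intro y0
      simp only [pow_zero, one_mul]
      have h0 : cdSeq F L H y0 (fun t => Classical.arbitrary (Fin n)) 0 = y0 := rfl
      simp [h0]
  | succ N ih =>
      intro y0
      have hre : (∑ w : Fin (N+1) → Fin n, (∏ k, (H + L (w k)) / Z) *
            F (cdSeq F L H y0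
              (fun t => if h : t < N + 1 then w ⟨t, h⟩ else Classical.arbitrary (Fin n)) (N+1)))
          = ∑ q : Fin n × (Fin N → Fin n), ((H + L q.1) / Z * ∏ k, (H + L (q.2 k)) / Z) *
            F (cdSeq F L H (cdStep F L H y0 q.1)
              (fun t => if h : t < N then q.2 ⟨t, h⟩ else Classical.arbitrary (Fin n)) N) := by
        refine (Fintype.sum_equiv (Fin.consEquiv (fun _ : Fin (N+1) => Fin n)) _ _ ?_).symm
        rintro ⟨i, w'⟩
        have hprod : (∏ k, (H + L ((Fin.consEquiv (fun _ : Fin (N+1) => Fin n)) (i, w') k)) / Z)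
            = (H + L i) / Z * ∏ k, (H + L (w' k)) / Z := by
          simp only [Fin.consEquiv_apply]
          rw [Fin.prod_univ_succ]
          simp
        have htraj : cdSeq F L H y0
              (fun t => if h : t < N + 1 then (Fin.cons i w' : Fin (N+1) → Fin n) ⟨t, h⟩
                else Classical.arbitrary (Fin n)) (N+1)
            = cdSeq F L H (cdStep F L H y0 i)
              (fun t => if h : t < N then w' ⟨t, h⟩ else Classical.arbitrary (Fin n)) N := by
          rw [cdSeq_shift']
          have h0 : (if h : 0 < N + 1 then (Fin.cons i w' : Fin (N+1) → Fin n) ⟨0, h⟩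
              else Classical.arbitrary (Fin n)) = i := by simp
          rw [h0]
          apply cdSeq_congr'
          intro t ht
          have h1 : t + 1 < N + 1 := Nat.succ_lt_succ ht
          simp only [h1, ht, dif_pos]
          exact Fin.cons_succ (α := fun _ : Fin (N+1) => Fin n) i w' ⟨t, ht⟩
        simp only [Fin.consEquiv_apply] at hprod ⊢
        rw [hprod, htraj]
      rw [hre, Fintype.sum_prod_type]
      have hinner : ∀ i : Fin n,
          (∑ w' : Fin N → Fin n, ((H + L i) / Z * ∏ k, (H + L (w' k)) / Z) *
            F (cdSeq F L H (cdStep F L H y0 i)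
              (fun t => if h : t < N then w' ⟨t, h⟩ else Classical.arbitrary (Fin n)) N))
          = (H + L i) / Z * ∑ w' : Fin N → Fin n, (∏ k, (H + L (w' k)) / Z) *
            F (cdSeq F L H (cdStep F L H y0 i)
              (fun t => if h : t < N then w' ⟨t, h⟩ else Classical.arbitrary (Fin n)) N) := by
        intro i
        rw [Finset.mul_sum]
        exact Finset.sum_congr rfl (fun w' _ => by ring)
      rw [Finset.sum_congr rfl (fun i _ => hinner i)]
      have hbound1 : ∀ i : Fin n,
          (H + L i) / Z * (∑ w' : Fin N → Fin n, (∏ k, (H + L (w' k)) / Z) *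
            F (cdSeq F L H (cdStep F L H y0 i)
              (fun t => if h : t < N then w' ⟨t, h⟩ else Classical.arbitrary (Fin n)) N))
          ≤ (H + L i) / Z * (F ystar + (1 - H / Z) ^ N * (F (cdStep F L H y0 i) - F ystar)) :=
        fun i => mul_le_mul_of_nonneg_left (ih (cdStep F L H y0 i))
          (div_nonneg (hKpos i).le hZ.le)
      calc ∑ i, (H + L i) / Z * (∑ w' : Fin N → Fin n, (∏ k, (H + L (w' k)) / Z) *
            F (cdSeq F L H (cdStep F L H y0 i)
              (fun t => if h : t < N then w' ⟨t, h⟩ else Classical.arbitrary (Fin n)) N))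
          ≤ ∑ i, (H + L i) / Z * (F ystar + (1 - H / Z) ^ N * (F (cdStep F L H y0 i) - F ystar)) :=
            Finset.sum_le_sum (fun i _ => hbound1 i)
        _ = F ystar + (1 - H / Z) ^ N * ((∑ i, (H + L i) / Z * F (cdStep F L H y0 i)) - F ystar) := by
            have : ∀ i : Fin n, (H + L i) / Z * (F ystar + (1 - H / Z) ^ N * (F (cdStep F L H y0 i) - F ystar))
                = (F ystar - (1 - H / Z) ^ N * F ystar) * ((H + L i) / Z)
                  + (1 - H / Z) ^ N * ((H + L i) / Z * F (cdStep F L H y0 i)) := fun i => by ring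
            rw [Finset.sum_congr rfl (fun i _ => this i), Finset.sum_add_distrib,
              ← Finset.mul_sum, ← Finset.mul_sum, hp1]
            ring
        _ ≤ F ystar + (1 - H / Z) ^ N * ((F ystar + (1 - H / Z) * (F y0 - F ystar)) - F ystar) := by
            have hes := exp_step hH hL hdiff hconv hcw ystar hmin y0
            rw [← hZdef] at hes
            have := mul_le_mul_of_nonneg_left (sub_le_sub_right hes (F ystar))
              (pow_nonneg hc N)
            linarith
        _ = F ystar + (1 - H / Z) ^ (N + 1) * (F y0 - F ystar) := by ring

theorem stmt15 {n : ℕ} [NeZero n] (F : EuclideanSpace ℝ (Fin n) → ℝ) (L : Fin n → ℝ) (H : ℝ)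
    (hH : 0 < H) (hL : ∀ i, 0 ≤ L i)
    (hdiff : Differentiable ℝ F)
    (hconv : StrongConvexOn Set.univ H F)
    (hcw : ∀ (y : EuclideanSpace ℝ (Fin n)) (u : ℝ) (i : Fin n),
      |fderiv ℝ F (y + u • EuclideanSpace.single i 1) (EuclideanSpace.single i 1)
          - fderiv ℝ F y (EuclideanSpace.single i 1)| ≤ (H + L i) * |u|)
    (ystar y0 : EuclideanSpace ℝ (Fin n)) (hmin : ∀ z, F ystar ≤ F z)
    (N : ℕ) :
    let Z : ℝ := ∑ i, (H + L i)
    (∑ w : Fin N → Fin n, (∏ k, (H + L (w k)) / Z) *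
        F (cdSeq F L H y0
            (fun t => if h : t < N then w ⟨t, h⟩ else Classical.arbitrary (Fin n)) N))
      - F ystar ≤ (1 - H / Z) ^ N * (F y0 - F ystar) := by
  intro Z
  have hmain := cd_main hH hL hdiff hconv hcw ystar hmin N y0
  show (∑ w : Fin N → Fin n, (∏ k, (H + L (w k)) / (∑ i, (H + L i))) *
        F (cdSeq F L H y0
            (fun t => if h : t < N then w ⟨t, h⟩ else Classical.arbitrary (Fin n)) N))
      - F ystar ≤ (1 - H / (∑ i, (H + L i))) ^ N * (F y0 - F ystar)
  linarith [hmain]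
end

section
/- Product of iteration-count bounds: with Ñ = ⌈(4√15/5)√(HR²/ε)⌉, N_δ = ⌈(Z/H)·ln((Ñ/δ)(1 + L/H)(3 + 2L/H)²)⌉, Z = n(H + L̄), and the choice H = L̄, the total iteration count N̂ = Ñ·N_δ satisfies N̂ = O( n·√(L̄R²/ε)·ln(1/(√ε·δ)) ) as ε → 0 and δ → 0, treating L, L̄, R, n as fixed. -/
set_option maxHeartbeats 1000000 in
theorem stmt19 (n : ℕ) (L Lbar R : ℝ) (hn : 0 < n) (hL : 0 < L) (hLbar : 0 < Lbar)
    (hR : 0 < R) :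
    ∃ C > (0 : ℝ), ∃ ε₀ > (0 : ℝ), ∃ δ₀ ∈ Set.Ioo (0 : ℝ) 1,
      ∀ ε δ : ℝ, 0 < ε → ε ≤ ε₀ → 0 < δ → δ ≤ δ₀ →
        let H := Lbar
        let Z := (n : ℝ) * (H + Lbar)
        let Ntil := ⌈(4 * Real.sqrt 15 / 5) * Real.sqrt (H * R ^ 2 / ε)⌉₊
        let Ndel := ⌈(Z / H) *
          Real.log (((Ntil : ℝ) / δ) * (1 + L / H) * (3 + 2 * L / H) ^ 2)⌉₊
        ((Ntil * Ndel : ℕ) : ℝ) ≤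
          C * n * Real.sqrt (Lbar * R ^ 2 / ε) * Real.log (1 / (Real.sqrt ε * δ)) := by
  set c : ℝ := 4 * Real.sqrt 15 / 5 with hcdef
  set A : ℝ := (1 + L / Lbar) * (3 + 2 * L / Lbar) ^ 2 with hAdef
  set K : ℝ := Real.sqrt (Lbar * R ^ 2) with hKdef
  have hK0 : 0 < K := Real.sqrt_pos.mpr (by positivity)
  have hLL : 0 < L / Lbar := by positivity
  have hA1 : (1 : ℝ) ≤ A := by
    rw [hAdef]
    have h1 : (1:ℝ) ≤ 1 + L / Lbar := by linarith
    have h2 : (1:ℝ) ≤ (3 + 2 * L / Lbar) ^ 2 := by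
      calc (1:ℝ) = 1 ^ 2 := by ring
        _ ≤ (3 + 2 * L / Lbar) ^ 2 := pow_le_pow_left₀ zero_le_one
          (by have : 0 < 2 * L / Lbar := by positivity
              linarith) 2
    calc (1:ℝ) = 1 * 1 := by ring
      _ ≤ (1 + L / Lbar) * (3 + 2 * L / Lbar) ^ 2 :=
        mul_le_mul h1 h2 zero_le_one (by linarith)
  have hs15 : Real.sqrt 15 ≤ 4 := by
    nlinarith [Real.sq_sqrt (by norm_num : (15:ℝ) ≥ 0), Real.sqrt_nonneg 15]
  have hc0 : 0 < c := by
    have : 0 < Real.sqrt 15 := Real.sqrt_pos.mpr (by norm_num)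
    rw [hcdef]; positivity
  have hc_le : c ≤ 16 / 5 := by rw [hcdef]; linarith
  set M : ℝ := 1 + |Real.log ((c + 1) * A)| + |Real.log K| with hMdef
  have habs1 := abs_nonneg (Real.log ((c + 1) * A))
  have habs2 := abs_nonneg (Real.log K)
  have hM1 : 1 ≤ M := by rw [hMdef]; linarith
  have hε₀ : (0:ℝ) < Lbar * R ^ 2 := by positivity
  have hsε₀ : 0 < Real.sqrt (Lbar * R ^ 2) := Real.sqrt_pos.mpr hε₀
  refine ⟨30, by norm_num, Lbar * R ^ 2, hε₀,
    min (1/2) (Real.exp (-M) / Real.sqrt (Lbar * R ^ 2)), ⟨?_, ?_⟩, ?_⟩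
  · exact lt_min (by norm_num) (by positivity)
  · exact lt_of_le_of_lt (min_le_left _ _) (by norm_num)
  intro ε δ hε hεe hδ hδe H Z Ntil Ndel
  have hH : H = Lbar := rfl
  have hZ : Z = (n : ℝ) * (H + Lbar) := rfl
  have hNtilDef0 : Ntil = ⌈c * Real.sqrt (H * R ^ 2 / ε)⌉₊ := rfl
  have hNdelDef0 : Ndel = ⌈(Z / H) *
      Real.log (((Ntil : ℝ) / δ) * (1 + L / H) * (3 + 2 * L / H) ^ 2)⌉₊ := rfl
  clear_value H Z Ntil Ndel
  subst H
  have hδ1 : δ ≤ 1/2 := le_trans hδe (min_le_left _ _)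
  have hδ2 : δ ≤ Real.exp (-M) / Real.sqrt (Lbar * R ^ 2) :=
    le_trans hδe (min_le_right _ _)
  set s : ℝ := Real.sqrt (Lbar * R ^ 2 / ε) with hsdef
  set T : ℝ := Real.log (1 / (Real.sqrt ε * δ)) with hTdef
  have hsε : 0 < Real.sqrt ε := Real.sqrt_pos.mpr hε
  have hs1 : 1 ≤ s := by
    rw [hsdef, show (1:ℝ) = Real.sqrt 1 by simp]
    exact Real.sqrt_le_sqrt ((one_le_div hε).mpr hεe)
  have hs0 : 0 < s := lt_of_lt_of_le one_pos hs1
  have hsK : s = K / Real.sqrt ε := by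
    rw [hsdef, hKdef, Real.sqrt_div (le_of_lt hε₀)]
  have hεδ0 : 0 < Real.sqrt ε * δ := by positivity
  have hET : Real.exp T = 1 / (Real.sqrt ε * δ) := Real.exp_log (by positivity)
  have hsmall : Real.sqrt ε * δ ≤ Real.exp (-M) := by
    have h1 : Real.sqrt ε ≤ Real.sqrt (Lbar * R ^ 2) := Real.sqrt_le_sqrt hεe
    calc Real.sqrt ε * δ ≤ Real.sqrt (Lbar * R ^ 2) *
          (Real.exp (-M) / Real.sqrt (Lbar * R ^ 2)) :=
          mul_le_mul h1 hδ2 (le_of_lt hδ) (le_of_lt hsε₀)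
      _ = Real.exp (-M) := by field_simp
  have hMT : M ≤ T := by
    have h2 : Real.exp M ≤ 1 / (Real.sqrt ε * δ) := by
      rw [le_div_iff₀ hεδ0]
      have h3 := mul_le_mul_of_nonneg_left hsmall (le_of_lt (Real.exp_pos M))
      rw [← Real.exp_add] at h3
      simpa using h3
    calc M = Real.log (Real.exp M) := (Real.log_exp M).symm
      _ ≤ T := Real.log_le_log (Real.exp_pos M) h2
  have hT1 : 1 ≤ T := le_trans hM1 hMT
  have hT0 : 0 < T := lt_of_lt_of_le one_pos hT1
  have hcA0 : 0 < (c + 1) * A := by positivity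
  have hcAT : (c + 1) * A ≤ Real.exp T := by
    calc (c + 1) * A = Real.exp (Real.log ((c + 1) * A)) := (Real.exp_log hcA0).symm
      _ ≤ Real.exp T := Real.exp_le_exp.mpr (by
          have h := le_abs_self (Real.log ((c + 1) * A))
          rw [hMdef] at hMT; linarith)
  have hKT : K ≤ Real.exp T := by
    calc K = Real.exp (Real.log K) := (Real.exp_log hK0).symm
      _ ≤ Real.exp T := Real.exp_le_exp.mpr (by
          have h := le_abs_self (Real.log K)
          rw [hMdef] at hMT; linarith)
  have hNtilDef : Ntil = ⌈c * s⌉₊ := hNtilDef0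
  have hNtil_lb : (1:ℝ) ≤ (Ntil : ℝ) := by
    have : 1 ≤ Ntil := by
      rw [hNtilDef]; exact Nat.one_le_ceil_iff.mpr (by positivity)
    exact_mod_cast this
  have hNtil_ub : (Ntil : ℝ) ≤ (c + 1) * s := by
    have h := Nat.ceil_lt_add_one (show (0:ℝ) ≤ c * s by positivity)
    rw [hNtilDef]
    have : (c + 1) * s = c * s + s := by ring
    linarith
  set X : ℝ := ((Ntil : ℝ) / δ) * (1 + L / Lbar) * (3 + 2 * L / Lbar) ^ 2 with hXdef
  have hXA : X = ((Ntil : ℝ) / δ) * A := by rw [hXdef, hAdef]; ring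
  have hX1 : (1:ℝ) ≤ X := by
    rw [hXA]
    have h1 : (1:ℝ) ≤ (Ntil : ℝ) / δ := by rw [le_div_iff₀ hδ]; linarith
    calc (1:ℝ) = 1 * 1 := by ring
      _ ≤ ((Ntil : ℝ) / δ) * A := mul_le_mul h1 hA1 zero_le_one (by positivity)
  have hX0 : (0:ℝ) < X := lt_of_lt_of_le one_pos hX1
  have hXle : X ≤ Real.exp (T + (T + T)) := by
    have h1 : X ≤ ((c + 1) * s / δ) * A := by
      rw [hXA]
      exact mul_le_mul_of_nonneg_right
        ((div_le_div_iff_of_pos_right hδ).mpr hNtil_ub) (by linarith)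
    have h2 : ((c + 1) * s / δ) * A = ((c + 1) * A) * (K * (1 / (Real.sqrt ε * δ))) := by
      rw [hsK]; field_simp
    have h3 : ((c + 1) * A) * (K * (1 / (Real.sqrt ε * δ))) ≤
        Real.exp T * (Real.exp T * Real.exp T) := by
      rw [← hET]
      have hE0 : 0 < Real.exp T := Real.exp_pos T
      have hKK : K * Real.exp T ≤ Real.exp T * Real.exp T :=
        mul_le_mul_of_nonneg_right hKT (le_of_lt hE0)
      exact mul_le_mul hcAT (by linarith) (by positivity) (le_of_lt hE0)
    rw [Real.exp_add, Real.exp_add]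
    linarith [h1, h2 ▸ h1, h3]
  have hlogX : Real.log X ≤ 3 * T := by
    have := Real.log_le_log hX0 hXle
    rw [Real.log_exp] at this; linarith
  have hlogX0 : 0 ≤ Real.log X := Real.log_nonneg hX1
  have hZH : Z / Lbar = 2 * (n : ℝ) := by
    rw [hZ]; field_simp; ring
  have hNdelDef : Ndel = ⌈(Z / Lbar) * Real.log X⌉₊ := hNdelDef0
  have hn1 : (1:ℝ) ≤ (n : ℝ) := by exact_mod_cast hn
  have hNdel_ub : (Ndel : ℝ) ≤ 7 * n * T := by
    have h := Nat.ceil_lt_add_one (show (0:ℝ) ≤ (Z / Lbar) * Real.log X by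
      rw [hZH]; positivity)
    rw [hNdelDef]
    have h2 : (Z / Lbar) * Real.log X ≤ 2 * n * (3 * T) := by
      rw [hZH]
      exact mul_le_mul_of_nonneg_left hlogX (by positivity)
    have h3 : (1:ℝ) ≤ (n:ℝ) * T := by
      calc (1:ℝ) = 1 * 1 := by ring
        _ ≤ (n:ℝ) * T := mul_le_mul hn1 hT1 zero_le_one (by positivity)
    have h4 : 2 * (n:ℝ) * (3 * T) = 6 * ((n:ℝ) * T) := by ring
    have h5 : 7 * (n:ℝ) * T = 7 * ((n:ℝ) * T) := by ring
    linarith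
  have hNdel0 : (0:ℝ) ≤ (Ndel : ℝ) := Nat.cast_nonneg _
  push_cast
  have hprod : (Ntil : ℝ) * (Ndel : ℝ) ≤ ((c + 1) * s) * (7 * n * T) :=
    mul_le_mul hNtil_ub hNdel_ub hNdel0 (by positivity)
  have hnsT : (0:ℝ) < (n : ℝ) * s * T := by positivity
  have h30 : ((c + 1) * s) * (7 * n * T) ≤ 30 * ((n:ℝ) * s * T) := by
    have he : ((c + 1) * s) * (7 * n * T) = (7 * (c + 1)) * ((n:ℝ) * s * T) := by ring
    rw [he]
    exact mul_le_mul_of_nonneg_right (by linarith) (le_of_lt hnsT)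
  have he2 : 30 * (n:ℝ) * s * T = 30 * ((n:ℝ) * s * T) := by ring
  linarith
end
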